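/- arXiv:1804.01071 — 2 statements merged into one kernel-verified Lean document; each statement's English description precedes it below -/
import Mathlib

section
/- Let d ≥ 1, let A be a symmetric d×d real matrix, and let η > 0 and ε ∈ ℝ. Then for every integer T ≥ 1, the expected matrix E[B_T] satisfies the recurrence E[B_T] = E[B_{T−1}] + η ( Aᵀ E[B_{T−1}] + E[B_{T−1}] A ) + η² d² diag( Aᵀ diag(E[B_{T−1}]) A ). -/
open Matrix BigOperators

/-- The rank-one sample matrix `A_{(i,j)} = d² A_{ij} e_i e_jᵀ`. -/
noncomputable def sampleMat {d : ℕ} (A : Matrix (Fin d) (Fin d) ℝ) (p : Fin d × Fin d) :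
    Matrix (Fin d) (Fin d) ℝ :=
  ((d : ℝ) ^ 2 * A p.1 p.2) • Matrix.single p.1 p.2 1

/-- `P_T(ω) = (I + η A_{(i_T,j_T)}) ⋯ (I + η A_{(i_1,j_1)})`. -/
noncomputable def prodMat {d : ℕ} (A : Matrix (Fin d) (Fin d) ℝ) (η : ℝ) :
    (T : ℕ) → (Fin T → Fin d × Fin d) → Matrix (Fin d) (Fin d) ℝ
  | 0, _ => 1
  | (T + 1), ω => (1 + η • sampleMat A (ω (Fin.last T))) * prodMat A η T (fun t => ω t.castSucc)

/-- `E[B_T]`: the average of `P_T(ω)ᵀ ((1-ε)I - A) P_T(ω)` over all sequences `ω`. -/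
noncomputable def EB {d : ℕ} (A : Matrix (Fin d) (Fin d) ℝ) (η ε : ℝ) (T : ℕ) :
    Matrix (Fin d) (Fin d) ℝ :=
  (Fintype.card (Fin T → Fin d × Fin d) : ℝ)⁻¹ •
    ∑ ω : Fin T → Fin d × Fin d,
      (prodMat A η T ω)ᵀ * ((1 - ε) • (1 : Matrix (Fin d) (Fin d) ℝ) - A) * prodMat A η T ω

/-- The operator (spectral) norm of a matrix, as a map on Euclidean space. -/
noncomputable def opNorm {d : ℕ} (M : Matrix (Fin d) (Fin d) ℝ) : ℝ :=
  ‖Matrix.toEuclideanCLM (𝕜 := ℝ) M‖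

/-- The maximum Euclidean column norm `‖M‖_{1→2} = max_j ‖M e_j‖₂`. -/
noncomputable def colNorm {d : ℕ} (M : Matrix (Fin d) (Fin d) ℝ) : ℝ :=
  ⨆ j : Fin d, Real.sqrt (∑ i : Fin d, (M i j) ^ 2)

/-- `diag(M)`: the diagonal matrix with the same diagonal as `M`. -/
def diagPart {d : ℕ} (M : Matrix (Fin d) (Fin d) ℝ) : Matrix (Fin d) (Fin d) ℝ :=
  Matrix.diagonal M.diag

/-!
Split off the first sampled factor: `P_T(ω) = P_{T-1}(ω') (I + η A_p)` with `ω'` again uniform and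
independent of `p`, so `E[B_T]` is the average over `p` of `(I + η A_p)ᵀ E[B_{T-1}] (I + η A_p)`.
The average of `A_p` is `A`, and since `A_{(i,j)}ᵀ C A_{(i,j)} = d⁴ A_{ij}² C_{ii} e_j e_jᵀ`, the
average of `A_pᵀ C A_p` is `d² diag(Aᵀ diag(C) A)`.
-/
lemma diagPart_smul {d : ℕ} (c : ℝ) (M : Matrix (Fin d) (Fin d) ℝ) :
    diagPart (c • M) = c • diagPart M := by
  simp only [diagPart, diag_smul, diagonal_smul]

lemma sum_sampleMat {d : ℕ} (A : Matrix (Fin d) (Fin d) ℝ) :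
    ∑ p, sampleMat A p = ((d : ℝ) ^ 2) • A := by
  ext a b
  simp [sampleMat, Matrix.sum_apply, Matrix.single_apply, Fintype.sum_prod_type, ite_and]

lemma sum_transpose_sampleMat_mul_mul_sampleMat {d : ℕ} (A C : Matrix (Fin d) (Fin d) ℝ) :
    ∑ p, (sampleMat A p)ᵀ * C * sampleMat A p
      = ((d : ℝ) ^ 4) • diagPart (Aᵀ * diagPart C * A) := by
  ext a b
  simp only [sampleMat, Matrix.transpose_smul, Matrix.transpose_single, Matrix.smul_mul,
    Matrix.mul_smul, Matrix.single_mul_mul_single, Matrix.sum_apply, Matrix.smul_apply,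
    Matrix.single_apply, Fintype.sum_prod_type, diagPart, Matrix.diagonal_apply, Matrix.diag_apply,
    Matrix.mul_apply, Matrix.transpose_apply, smul_eq_mul]
  rcases eq_or_ne a b with rfl | hab
  · rw [Finset.sum_comm]
    simp only [and_self, mul_ite, mul_zero, Finset.sum_ite_irrel, Finset.sum_const_zero,
      Finset.sum_ite_eq', Finset.mem_univ, ↓reduceIte, Finset.mul_sum]
    exact Finset.sum_congr rfl fun i _ => by ring
  · have hne : ∀ j, ¬ (j = a ∧ j = b) := fun j h => hab (h.1.symm.trans h.2)
    simp [hne, hab]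

noncomputable def stepMap {d : ℕ} (A : Matrix (Fin d) (Fin d) ℝ) (η : ℝ)
    (C : Matrix (Fin d) (Fin d) ℝ) : Matrix (Fin d) (Fin d) ℝ :=
  C + η • (Aᵀ * C + C * A) + (η ^ 2 * (d : ℝ) ^ 2) • diagPart (Aᵀ * diagPart C * A)

lemma stepMap_smul {d : ℕ} (A : Matrix (Fin d) (Fin d) ℝ) (η c : ℝ)
    (C : Matrix (Fin d) (Fin d) ℝ) : stepMap A η (c • C) = c • stepMap A η C := by
  simp only [stepMap, Matrix.mul_smul, Matrix.smul_mul, diagPart_smul]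
  module

lemma sum_conj_one_add_smul_sampleMat {d : ℕ} (A C : Matrix (Fin d) (Fin d) ℝ) (η : ℝ) :
    ∑ p, (1 + η • sampleMat A p)ᵀ * C * (1 + η • sampleMat A p)
      = ((d : ℝ) ^ 2) • stepMap A η C := by
  have expand : ∀ p, (1 + η • sampleMat A p)ᵀ * C * (1 + η • sampleMat A p)
      = C + η • ((sampleMat A p)ᵀ * C + C * sampleMat A p)
        + (η ^ 2) • ((sampleMat A p)ᵀ * C * sampleMat A p) := fun p => by
    simp only [Matrix.transpose_add, Matrix.transpose_one, Matrix.transpose_smul, add_mul, mul_add,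
      one_mul, mul_one, Matrix.smul_mul, Matrix.mul_smul]
    module
  simp only [expand, Finset.sum_add_distrib, ← Finset.smul_sum, ← Finset.sum_mul, ← Finset.mul_sum,
    ← Matrix.transpose_sum, sum_sampleMat, sum_transpose_sampleMat_mul_mul_sampleMat,
    Finset.sum_const, Finset.card_univ, Fintype.card_prod, Fintype.card_fin, stepMap,
    Matrix.transpose_smul, Matrix.smul_mul, Matrix.mul_smul]
  rw [← Nat.cast_smul_eq_nsmul ℝ]
  push_cast
  module

lemma prodMat_snoc {d : ℕ} (A : Matrix (Fin d) (Fin d) ℝ) (η : ℝ) (T : ℕ)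
    (ω : Fin T → Fin d × Fin d) (p : Fin d × Fin d) :
    prodMat A η (T + 1) (Fin.snoc ω p) = (1 + η • sampleMat A p) * prodMat A η T ω := by
  simp [prodMat]

lemma prodMat_cons {d : ℕ} (A : Matrix (Fin d) (Fin d) ℝ) (η : ℝ) (T : ℕ)
    (p : Fin d × Fin d) (ω : Fin T → Fin d × Fin d) :
    prodMat A η (T + 1) (Fin.cons p ω) = prodMat A η T ω * (1 + η • sampleMat A p) := by
  induction T with
  | zero => simp [prodMat]
  | succ T ih =>
    rw [← Fin.snoc_init_self ω]
    simp only [Fin.cons_snoc_eq_snoc_cons, prodMat_snoc, ih, mul_assoc]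

lemma sum_conj_prodMat_succ {d : ℕ} (A M : Matrix (Fin d) (Fin d) ℝ) (η : ℝ) (T : ℕ) :
    ∑ ω, (prodMat A η (T + 1) ω)ᵀ * M * prodMat A η (T + 1) ω
      = ((d : ℝ) ^ 2) • stepMap A η (∑ ω, (prodMat A η T ω)ᵀ * M * prodMat A η T ω) := by
  rw [← sum_conj_one_add_smul_sampleMat, ← (Fin.consEquiv _).sum_comp, Fintype.sum_prod_type]
  refine Finset.sum_congr rfl fun p _ => ?_
  simp only [Fin.consEquiv, Equiv.coe_fn_mk, prodMat_cons, Matrix.transpose_mul, Finset.mul_sum,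
    Finset.sum_mul, Matrix.mul_assoc]

theorem stmt1_general {d : ℕ} (A : Matrix (Fin d) (Fin d) ℝ)
    (η ε : ℝ) (T : ℕ) (hT : 1 ≤ T) :
    EB A η ε T = EB A η ε (T - 1)
      + η • (Aᵀ * EB A η ε (T - 1) + EB A η ε (T - 1) * A)
      + (η ^ 2 * (d : ℝ) ^ 2) • diagPart (Aᵀ * diagPart (EB A η ε (T - 1)) * A) := by
  obtain ⟨T, rfl⟩ := Nat.exists_eq_add_of_le' hT
  obtain rfl | hd := Nat.eq_zero_or_pos d
  · exact Subsingleton.elim _ _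
  have hcard : (Fintype.card (Fin (T + 1) → Fin d × Fin d) : ℝ)
      = (d : ℝ) ^ 2 * Fintype.card (Fin T → Fin d × Fin d) := by
    simp only [Fintype.card_fun, Fintype.card_prod, Fintype.card_fin]
    push_cast
    ring
  change EB A η ε (T + 1) = stepMap A η (EB A η ε T)
  rw [EB, EB, sum_conj_prodMat_succ, hcard, stepMap_smul, smul_smul, _root_.mul_inv_rev,
    inv_mul_cancel_right₀ (by positivity)]

theorem stmt1 {d : ℕ} (hd : 1 ≤ d) (A : Matrix (Fin d) (Fin d) ℝ) (hsymm : A.IsSymm)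
    (η ε : ℝ) (hη : 0 < η) (T : ℕ) (hT : 1 ≤ T) :
    EB A η ε T = EB A η ε (T - 1)
      + η • (Aᵀ * EB A η ε (T - 1) + EB A η ε (T - 1) * A)
      + (η ^ 2 * (d : ℝ) ^ 2) • diagPart (Aᵀ * diagPart (EB A η ε (T - 1)) * A) :=
  stmt1_general A η ε T hT
end

section
/- Let η ∈ (0,1), ε > 0, let T be a positive integer, and set f(s) = (1 + 2ηs)^T (1 − ε − s) and s_c = (T(1−ε) − 1/(2η)) / (T+1). If s_c ∈ [0,1], then f(s_c) ≤ (1 + 2η(1−ε))^T / (η (T+1)). -/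
/-!
At the critical point both factors of `f` are multiples of `b = 1 + 2η(1 - ε)`:
`1 + 2η s_c = b T / (T + 1)` and `1 - ε - s_c = b / (2η (T + 1))`. Hence
`f(s_c) = b^T / (η (T + 1)) · (b / 2) (T / (T + 1))^T`, and the last factor is at most `1`
because `b < 3` and, by Bernoulli's inequality, `(1 + 1/T)^T ≥ 2`.
-/

lemma div_add_one_pow_le_half (n : ℕ) (hn : n ≠ 0) : ((n : ℝ) / (n + 1)) ^ n ≤ 1 / 2 := by
  have hn' : (0 : ℝ) < n := by exact_mod_cast Nat.pos_of_ne_zero hn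
  have bernoulli : (2 : ℝ) ≤ (1 + (n : ℝ)⁻¹) ^ n := by
    have := one_add_mul_le_pow (by linarith [inv_nonneg.2 hn'.le] : (-2 : ℝ) ≤ (n : ℝ)⁻¹) n
    rwa [mul_inv_cancel₀ hn'.ne', one_add_one_eq_two] at this
  have hinv : (n : ℝ) / (n + 1) = (1 + (n : ℝ)⁻¹)⁻¹ := by
    field_simp
  rw [hinv, inv_pow, one_div]
  exact inv_anti₀ two_pos bernoulli

section Critical

variable (η ε t : ℝ)

lemma one_add_two_mul_critical (hη : η ≠ 0) (ht : t + 1 ≠ 0) :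
    1 + 2 * η * ((t * (1 - ε) - 1 / (2 * η)) / (t + 1)) = (1 + 2 * η * (1 - ε)) * t / (t + 1) := by
  field_simp
  ring

lemma one_sub_sub_critical (hη : η ≠ 0) (ht : t + 1 ≠ 0) :
    1 - ε - (t * (1 - ε) - 1 / (2 * η)) / (t + 1) = (1 + 2 * η * (1 - ε)) / (2 * η * (t + 1)) := by
  field_simp
  ring

end Critical

lemma mul_add_one_pow_mul_le (η b : ℝ) (hη : 0 < η) (hb₀ : 0 ≤ b) (hb₄ : b ≤ 4)
    (n : ℕ) (hn : n ≠ 0) :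
    (b * n / (n + 1)) ^ n * (b / (2 * η * (n + 1))) ≤ b ^ n / (η * (n + 1)) := by
  have hq := div_add_one_pow_le_half n hn
  have hfactor : b / 2 * ((n : ℝ) / (n + 1)) ^ n ≤ 1 := by
    nlinarith [pow_nonneg (by positivity : (0 : ℝ) ≤ n / (n + 1)) n]
  calc (b * n / (n + 1)) ^ n * (b / (2 * η * (n + 1)))
      = b ^ n / (η * (n + 1)) * (b / 2 * ((n : ℝ) / (n + 1)) ^ n) := by
        rw [mul_div_assoc, mul_pow]
        field_simp
    _ ≤ b ^ n / (η * (n + 1)) := mul_le_of_le_one_right (by positivity) hfactor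

theorem stmt14 (η ε : ℝ) (hη : η ∈ Set.Ioo (0 : ℝ) 1) (hε : 0 < ε)
    (T : ℕ) (hT : 1 ≤ T)
    (sc : ℝ) (hsc : sc = ((T : ℝ) * (1 - ε) - 1 / (2 * η)) / ((T : ℝ) + 1))
    (hmem : sc ∈ Set.Icc (0 : ℝ) 1) :
    (1 + 2 * η * sc) ^ T * (1 - ε - sc) ≤ (1 + 2 * η * (1 - ε)) ^ T / (η * ((T : ℝ) + 1)) := by
  obtain ⟨hη₀, hη₁⟩ := hη
  have hT₁ : (0 : ℝ) < T + 1 := by positivity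
  have hsc₀ : 0 ≤ (T : ℝ) * (1 - ε) - 1 / (2 * η) := by
    have := hmem.1
    rwa [hsc, le_div_iff₀ hT₁, zero_mul] at this
  have hε₁ : 0 < 1 - ε := by
    have : 0 < (T : ℝ) * (1 - ε) := by linarith [one_div_pos.2 (mul_pos two_pos hη₀)]
    exact pos_of_mul_pos_right this (Nat.cast_nonneg T)
  subst hsc
  rw [one_add_two_mul_critical η ε T hη₀.ne' hT₁.ne', one_sub_sub_critical η ε T hη₀.ne' hT₁.ne']
  exact mul_add_one_pow_mul_le η _ hη₀ (by positivity) (by nlinarith [mul_pos hη₀ hε]) T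
    (by omega)
end
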